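/- Every well-positioned infinitesimally rigid framework is strongly infinitesimally rigid, and every strongly infinitesimally rigid framework is infinitesimally rigid. -/

import Mathlib

open Filter

/-- The rigidity map of a graph with edge set `E` in a normed space `X`. -/
noncomputable def rigidityMap {V X : Type*} [NormedAddCommGroup X]
    (E : Finset (V × V)) (p : V → X) : E → ℝ :=
  fun e => ‖p (e : V × V).1 - p (e : V × V).2‖

/-- The Clarke generalised differential of `f` at `x`. -/
noncomputable def clarkeDiff {X Y : Type*} [NormedAddCommGroup X] [NormedSpace ℝ X]
    [NormedAddCommGroup Y] [NormedSpace ℝ Y] (f : X → Y) (x : X) : Set (X →L[ℝ] Y) :=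
  convexHull ℝ {L : X →L[ℝ] Y | ∃ q : ℕ → X,
    Tendsto q atTop (nhds x) ∧ (∀ n, DifferentiableAt ℝ f (q n)) ∧
    Tendsto (fun n => fderiv ℝ f (q n)) atTop (nhds L)}

/-- `u` is an infinitesimal flex of `(G,p)`. -/
def IsInfFlex {V X : Type*} [Fintype V] [NormedAddCommGroup X] [NormedSpace ℝ X]
    (E : Finset (V × V)) (p u : V → X) : Prop :=
  Tendsto (fun t : ℝ => t⁻¹ • (rigidityMap E (p + t • u) - rigidityMap E p))
    (nhdsWithin 0 {(0 : ℝ)}ᶜ) (nhds 0)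

section helpers

variable {F G : Type*} [NormedAddCommGroup F] [NormedSpace ℝ F]
  [NormedAddCommGroup G] [NormedSpace ℝ G]

lemma line_hasDerivAt {g : F → G} {φ : F →L[ℝ] G} {x : F} (h : HasFDerivAt g φ x) (v : F) :
    HasDerivAt (fun t : ℝ => g (x + t • v)) (φ v) 0 := by
  have hline : HasDerivAt (fun t : ℝ => x + t • v) v 0 := by
    simpa using ((hasDerivAt_id (0 : ℝ)).smul_const v).const_add x
  have h' : HasFDerivAt g φ (x + (0:ℝ) • v) := by simpa using h
  exact h'.comp_hasDerivAt 0 hline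

lemma tendsto_slope_right {g : ℝ → G} {d : G} (h : HasDerivAt g d 0) :
    Tendsto (fun t : ℝ => t⁻¹ • (g t - g 0)) (nhdsWithin 0 (Set.Ioi 0)) (nhds d) := by
  have := hasDerivAt_iff_tendsto_slope.mp h
  have h2 : Tendsto (slope g 0) (nhdsWithin 0 (Set.Ioi 0)) (nhds d) :=
    this.mono_left (nhdsWithin_mono _ (fun t ht => ne_of_gt ht))
  convert h2 using 2 with t
  simp [slope, vsub_eq_sub]

lemma subgrad_dirle {g : F → ℝ} {φ : F →L[ℝ] ℝ} {x v : F} {c : ℝ}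
    (hsub : ∀ t : ℝ, φ (t • v) ≤ g (x + t • v) - g x)
    (hc : Tendsto (fun t : ℝ => t⁻¹ • (g (x + t • v) - g x)) (nhdsWithin 0 (Set.Ioi 0)) (nhds c)) :
    φ v ≤ c := by
  refine ge_of_tendsto hc ?_
  filter_upwards [self_mem_nhdsWithin] with t ht
  have ht0 : (0:ℝ) < t := ht
  have h := hsub t
  have hφ : φ (t • v) = t * φ v := by simp [map_smul]
  rw [hφ] at h
  rw [smul_eq_mul]
  calc φ v = t⁻¹ * (t * φ v) := by field_simp
    _ ≤ t⁻¹ * (g (x + t • v) - g x) := by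
        exact mul_le_mul_of_nonneg_left h (inv_nonneg.mpr ht0.le)

/-- subgradient inequality for a convex function differentiable at a point -/
lemma subgrad_of_hasFDerivAt {g : F → ℝ} (hg : ConvexOn ℝ Set.univ g) {x : F} {φ : F →L[ℝ] ℝ}
    (h : HasFDerivAt g φ x) (y : F) : φ (y - x) ≤ g y - g x := by
  have hd := tendsto_slope_right (line_hasDerivAt h (y - x))
  simp only [zero_smul, add_zero] at hd
  refine le_of_tendsto hd ?_
  have hmem : Set.Ioo (0:ℝ) 1 ∈ nhdsWithin (0:ℝ) (Set.Ioi 0) :=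
    Ioo_mem_nhdsGT_of_mem (by constructor <;> norm_num)
  filter_upwards [hmem] with t ht
  obtain ⟨ht0, ht1⟩ := ht
  have hcvx := hg.2 (Set.mem_univ x) (Set.mem_univ y)
    (show (0:ℝ) ≤ 1 - t by linarith) ht0.le (show (1 - t) + t = 1 by ring)
  have hx : (1 - t) • x + t • y = x + t • (y - x) := by
    rw [smul_sub, sub_smul, one_smul]; abel
  rw [hx, smul_eq_mul, smul_eq_mul] at hcvx
  rw [smul_eq_mul]
  have h2 : g (x + t • (y - x)) - g x ≤ t * (g y - g x) := by nlinarith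
  calc t⁻¹ * (g (x + t • (y - x)) - g x) ≤ t⁻¹ * (t * (g y - g x)) :=
        mul_le_mul_of_nonneg_left h2 (inv_nonneg.mpr ht0.le)
    _ = g y - g x := by field_simp

end helpers

section rig

variable {V X : Type*} [Fintype V] [NormedAddCommGroup X] [NormedSpace ℝ X]

lemma edge_convex (a b : V) : ConvexOn ℝ Set.univ (fun q : V → X => ‖q a - q b‖) := by
  refine ⟨convex_univ, fun q _ r _ s t hs ht hst => ?_⟩
  simp only [Pi.add_apply, Pi.smul_apply, smul_eq_mul]
  calc ‖(s • q + t • r) a - (s • q + t • r) b‖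
      = ‖s • (q a - q b) + t • (r a - r b)‖ := by
        congr 1
        simp only [Pi.add_apply, Pi.smul_apply, smul_sub]
        abel
    _ ≤ ‖s • (q a - q b)‖ + ‖t • (r a - r b)‖ := norm_add_le _ _
    _ = s * ‖q a - q b‖ + t * ‖r a - r b‖ := by
        rw [norm_smul, norm_smul, Real.norm_eq_abs, Real.norm_eq_abs,
          abs_of_nonneg hs, abs_of_nonneg ht]

lemma edge_continuous (a b : V) : Continuous (fun q : V → X => ‖q a - q b‖) :=
  ((continuous_apply a).sub (continuous_apply b)).norm

lemma rigidity_lipschitz (E : Finset (V × V)) : LipschitzWith 2 (rigidityMap (X := X) E) := by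
  refine LipschitzWith.of_dist_le_mul fun q r => ?_
  rw [dist_pi_le_iff (by positivity)]
  intro e
  rw [Real.dist_eq, rigidityMap, rigidityMap]
  calc |‖q (e : V × V).1 - q (e : V × V).2‖ - ‖r (e : V × V).1 - r (e : V × V).2‖|
      ≤ ‖(q (e : V × V).1 - q (e : V × V).2) - (r (e : V × V).1 - r (e : V × V).2)‖ :=
        abs_norm_sub_norm_le _ _
    _ = ‖(q (e : V × V).1 - r (e : V × V).1) - (q (e : V × V).2 - r (e : V × V).2)‖ := by
        congr 1; abel
    _ ≤ ‖q (e : V × V).1 - r (e : V × V).1‖ + ‖q (e : V × V).2 - r (e : V × V).2‖ :=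
        norm_sub_le _ _
    _ ≤ dist q r + dist q r := by
        have h1 : ‖(q - r) (e : V × V).1‖ ≤ ‖q - r‖ := norm_le_pi_norm (q - r) _
        have h2 : ‖(q - r) (e : V × V).2‖ ≤ ‖q - r‖ := norm_le_pi_norm (q - r) _
        simp only [Pi.sub_apply] at h1 h2
        rw [dist_eq_norm]
        exact add_le_add h1 h2
    _ = 2 * dist q r := by ring

/-- every element of the Clarke differential is componentwise a subgradient. -/
lemma clarke_subgrad (E : Finset (V × V)) (p : V → X) :
    ∀ L ∈ clarkeDiff (rigidityMap E) p, ∀ e : E, ∀ y : V → X,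
      L (y - p) e ≤ rigidityMap E y e - rigidityMap E p e := by
  set f := rigidityMap (X := X) E with hf
  set K : Set ((V → X) →L[ℝ] (E → ℝ)) :=
    {L | ∀ e : E, ∀ y : V → X, L (y - p) e ≤ f y e - f p e} with hK
  suffices h : clarkeDiff f p ⊆ K by exact fun L hL => h hL
  refine convexHull_min ?_ ?_
  · rintro L ⟨q, hq, hd, hconv⟩ e y
    have key : ∀ n, (fderiv ℝ f (q n)) (y - q n) e ≤ f y e - f (q n) e := by
      intro n
      have hproj : HasFDerivAt (fun z : V → X => f z e)
          ((ContinuousLinearMap.proj (R := ℝ) (φ := fun _ : E => ℝ) e).comp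
            (fderiv ℝ f (q n))) (q n) :=
        (ContinuousLinearMap.proj (R := ℝ) (φ := fun _ : E => ℝ) e).hasFDerivAt.comp _
          (hd n).hasFDerivAt
      exact subgrad_of_hasFDerivAt (edge_convex (e : V × V).1 (e : V × V).2) hproj y
    have hlhs : Tendsto (fun n => (fderiv ℝ f (q n)) (y - q n) e) atTop
        (nhds (L (y - p) e)) := by
      have happ : Tendsto (fun n => (fderiv ℝ f (q n)) (y - q n)) atTop (nhds (L (y - p))) := by
        have hpair : Tendsto (fun n => ((fderiv ℝ f (q n) : (V → X) →L[ℝ] (E → ℝ)), y - q n))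
            atTop (nhds (L, y - p)) :=
          hconv.prodMk_nhds (tendsto_const_nhds.sub hq)
        exact ((isBoundedBilinearMap_apply (𝕜 := ℝ)).continuous.tendsto (L, y - p)).comp hpair
      exact ((continuous_apply e).tendsto (L (y - p))).comp happ
    have hrhs : Tendsto (fun n => f y e - f (q n) e) atTop (nhds (f y e - f p e)) := by
      have : Tendsto (fun n => f (q n) e) atTop (nhds (f p e)) :=
        (((edge_continuous (V := V) (X := X) (e : V × V).1 (e : V × V).2).tendsto p).comp hq)
      exact tendsto_const_nhds.sub this
    exact le_of_tendsto_of_tendsto' hlhs hrhs key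
  · intro L₁ h₁ L₂ h₂ a b ha hb hab
    intro e y
    have e₁ := h₁ e y
    have e₂ := h₂ e y
    simp only [ContinuousLinearMap.add_apply, ContinuousLinearMap.coe_smul',
      Pi.smul_apply, Pi.add_apply, smul_eq_mul]
    calc a * L₁ (y - p) e + b * L₂ (y - p) e
        ≤ a * (f y e - f p e) + b * (f y e - f p e) :=
          add_le_add (mul_le_mul_of_nonneg_left e₁ ha) (mul_le_mul_of_nonneg_left e₂ hb)
      _ = f y e - f p e := by rw [← add_mul, hab, one_mul]

end rig

section helpers2

variable {F : Type*} [NormedAddCommGroup F] [NormedSpace ℝ F]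

lemma subgrad_unique {g : F → ℝ} {ψ φ : F →L[ℝ] ℝ} {x : F}
    (hsub : ∀ y, ψ (y - x) ≤ g y - g x) (h : HasFDerivAt g φ x) (w : F) : ψ w = φ w := by
  have key : ∀ w : F, ψ w ≤ φ w := by
    intro w
    refine subgrad_dirle (fun t => by simpa using hsub (x + t • w)) ?_
    have := tendsto_slope_right (line_hasDerivAt h w)
    simpa using this
  have h1 := key w
  have h2 := key (-w)
  simp only [map_neg] at h2
  linarith

lemma neg_tendsto_punctured :
    Tendsto (fun t : ℝ => -t) (nhdsWithin 0 (Set.Ioi 0)) (nhdsWithin 0 {(0:ℝ)}ᶜ) := by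
  rw [tendsto_nhdsWithin_iff]
  constructor
  · have : Tendsto (fun t : ℝ => -t) (nhds 0) (nhds (-0)) := (continuous_neg.tendsto (0:ℝ))
    rw [neg_zero] at this
    exact this.mono_left nhdsWithin_le_nhds
  · filter_upwards [self_mem_nhdsWithin] with t ht
    exact neg_ne_zero.mpr (ne_of_gt ht)

lemma subgrad_zero_of_slope_zero {g : F → ℝ} {ψ : F →L[ℝ] ℝ} {x u : F}
    (hsub : ∀ y : F, ψ (y - x) ≤ g y - g x)
    (hflex : Tendsto (fun t : ℝ => t⁻¹ * (g (x + t • u) - g x))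
      (nhdsWithin 0 {(0:ℝ)}ᶜ) (nhds 0)) : ψ u = 0 := by
  have hpos : Tendsto (fun t : ℝ => t⁻¹ * (g (x + t • u) - g x))
      (nhdsWithin 0 (Set.Ioi 0)) (nhds 0) :=
    hflex.mono_left (nhdsWithin_mono _ (fun t ht => ne_of_gt ht))
  have h1 : ψ u ≤ 0 :=
    subgrad_dirle (fun t => by simpa using hsub (x + t • u)) (by simpa [smul_eq_mul] using hpos)
  have h2'' : Tendsto (fun t : ℝ => t⁻¹ * (g (x + t • (-u)) - g x))
      (nhdsWithin 0 (Set.Ioi 0)) (nhds 0) := by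
    have h2' := (hflex.comp neg_tendsto_punctured).neg
    rw [neg_zero] at h2'
    refine h2'.congr fun t => ?_
    simp only [Function.comp, inv_neg, neg_smul, smul_neg, neg_mul, neg_neg]
  have h2 : ψ (-u) ≤ 0 :=
    subgrad_dirle (fun t => by simpa using hsub (x + t • (-u)))
      (by simpa [smul_eq_mul] using h2'')
  simp only [map_neg] at h2
  linarith

end helpers2

/-- Every well-positioned infinitesimally rigid framework is strongly infinitesimally
rigid, and every strongly infinitesimally rigid framework is infinitesimally rigid.
Here `T` is the space of trivial infinitesimal flexes (every element of which is an
infinitesimal flex); infinitesimal rigidity says every infinitesimal flex lies in `T`;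
strong infinitesimal rigidity says `ker δf_G(p) = T` for every generalised rigidity
operator `δf_G(p) ∈ ∂f_G(p)`; well-positioned means `f_G` is differentiable at `p`. -/
theorem stmt7 {V X : Type*} [Fintype V] [NormedAddCommGroup X] [NormedSpace ℝ X]
    [FiniteDimensional ℝ X] (E : Finset (V × V)) (p : V → X)
    (T : Submodule ℝ (V → X)) (hT : ∀ u ∈ T, IsInfFlex E p u) :
    ((DifferentiableAt ℝ (rigidityMap E) p ∧ (∀ u : V → X, IsInfFlex E p u → u ∈ T)) →
        ∀ L ∈ clarkeDiff (rigidityMap E) p, ∀ u : V → X, L u = 0 ↔ u ∈ T) ∧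
    ((∀ L ∈ clarkeDiff (rigidityMap E) p, ∀ u : V → X, L u = 0 ↔ u ∈ T) →
        ∀ u : V → X, IsInfFlex E p u → u ∈ T) := by
  have hslope_eq : ∀ w : V → X,
      (fun t : ℝ => t⁻¹ • (rigidityMap E (p + t • w) - rigidityMap E p))
        = slope (fun t : ℝ => rigidityMap E (p + t • w)) 0 := by
    intro w
    funext t
    simp [slope, vsub_eq_sub]
  constructor
  · rintro ⟨hdiff, hrig⟩ L hL u
    set D := fderiv ℝ (rigidityMap E) p with hD
    have hDf : HasFDerivAt (rigidityMap E) D p := hdiff.hasFDerivAt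
    have hcomp : ∀ (v : V → X) (e : E), L v e = D v e := by
      intro v e
      have hproj : HasFDerivAt (fun z : V → X => rigidityMap E z e)
          ((ContinuousLinearMap.proj (R := ℝ) (φ := fun _ : E => ℝ) e).comp D) p :=
        (ContinuousLinearMap.proj (R := ℝ) (φ := fun _ : E => ℝ) e).hasFDerivAt.comp _ hDf
      have hsub : ∀ y : V → X,
          ((ContinuousLinearMap.proj (R := ℝ) (φ := fun _ : E => ℝ) e).comp L) (y - p)
            ≤ rigidityMap E y e - rigidityMap E p e := by
        intro y
        simpa using clarke_subgrad E p L hL e y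
      exact subgrad_unique hsub hproj v
    have hLD : ∀ v, L v = D v := fun v => funext fun e => hcomp v e
    have hslope : ∀ w : V → X,
        Tendsto (fun t : ℝ => t⁻¹ • (rigidityMap E (p + t • w) - rigidityMap E p))
          (nhdsWithin 0 {(0:ℝ)}ᶜ) (nhds (D w)) := by
      intro w
      rw [hslope_eq w]
      exact hasDerivAt_iff_tendsto_slope.mp (line_hasDerivAt hDf w)
    constructor
    · intro hLu
      have hDu : D u = 0 := by rw [← hLD u]; exact hLu
      have hflex : IsInfFlex E p u := by
        have h := hslope u
        rw [hDu] at h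
        exact h
      exact hrig u hflex
    · intro hu
      have hflex : Tendsto (fun t : ℝ => t⁻¹ • (rigidityMap E (p + t • u) - rigidityMap E p))
          (nhdsWithin 0 {(0:ℝ)}ᶜ) (nhds 0) := hT u hu
      have hDu : D u = 0 := tendsto_nhds_unique (hslope u) hflex
      rw [hLD u, hDu]
  · intro hstrong u hu
    letI : MeasurableSpace (V → X) := borel _
    haveI : BorelSpace (V → X) := ⟨rfl⟩
    set μ := (Module.Basis.ofVectorSpace ℝ (V → X)).addHaar with hμ
    have hae : ∀ᵐ x ∂μ, DifferentiableAt ℝ (rigidityMap (X := X) E) x :=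
      (rigidity_lipschitz (X := X) E).ae_differentiableAt
    have hdense : Dense {x : V → X | DifferentiableAt ℝ (rigidityMap (X := X) E) x} :=
      MeasureTheory.Measure.dense_of_ae hae
    have hq : ∀ n : ℕ, ∃ y : V → X, DifferentiableAt ℝ (rigidityMap (X := X) E) y ∧
        dist p y < 1 / (n + 1) := by
      intro n
      obtain ⟨y, hy, hyd⟩ := hdense.exists_dist_lt p (show (0:ℝ) < 1 / (n + 1) by positivity)
      exact ⟨y, hy, hyd⟩
    choose q hdq hdist using hq
    have hqto : Tendsto q atTop (nhds p) := by
      rw [tendsto_iff_dist_tendsto_zero]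
      refine squeeze_zero (fun n => dist_nonneg) (fun n => ?_)
        tendsto_one_div_add_atTop_nhds_zero_nat
      rw [dist_comm]
      exact (hdist n).le
    have hbd : ∀ n, fderiv ℝ (rigidityMap (X := X) E) (q n)
        ∈ Metric.closedBall (0 : (V → X) →L[ℝ] (E → ℝ)) 2 := by
      intro n
      rw [Metric.mem_closedBall, dist_zero_right]
      have h := norm_fderiv_le_of_lipschitz (𝕜 := ℝ) (x₀ := q n) (rigidity_lipschitz (X := X) E)
      simpa using h
    obtain ⟨L, _, φ, hφ, hLto⟩ :=
      (isCompact_closedBall (0 : (V → X) →L[ℝ] (E → ℝ)) 2).tendsto_subseq hbd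
    have hLmem : L ∈ clarkeDiff (rigidityMap E) p :=
      subset_convexHull ℝ _ ⟨q ∘ φ, hqto.comp hφ.tendsto_atTop, fun n => hdq (φ n), hLto⟩
    refine (hstrong L hLmem u).mp ?_
    funext e
    have hsub : ∀ y : V → X,
        ((ContinuousLinearMap.proj (R := ℝ) (φ := fun _ : E => ℝ) e).comp L) (y - p)
          ≤ rigidityMap E y e - rigidityMap E p e := by
      intro y
      simpa using clarke_subgrad E p L hLmem e y
    have hue : Tendsto (fun t : ℝ => t⁻¹ * (rigidityMap E (p + t • u) e - rigidityMap E p e))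
        (nhdsWithin 0 {(0:ℝ)}ᶜ) (nhds 0) := by
      have h0 : Tendsto
          (fun t : ℝ => (t⁻¹ • (rigidityMap E (p + t • u) - rigidityMap E p)) e)
          (nhdsWithin 0 {(0:ℝ)}ᶜ) (nhds ((0 : E → ℝ) e)) :=
        ((continuous_apply (A := fun _ : E => ℝ) e).tendsto (0 : E → ℝ)).comp hu
      simpa using h0
    have hz := subgrad_zero_of_slope_zero (g := fun z : V → X => rigidityMap E z e) hsub hue
    simpa using hz
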